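/- arXiv:2101.11083 — 3 statements merged into one kernel-verified Lean document; each statement's English description precedes it below -/
import Mathlib

section
/- Let T be a finite dyadic tree on (0,1]^d, F̃⁽ⁿ⁾ a probability measure, and define G ∈ 𝒫_T by G(A_l|A) = (1−c(A))μ(A_l|A) + c(A)·F̃⁽ⁿ⁾(A_l|A) for each interior node A with c(A) ∈ (0,1] (with the convention F̃⁽ⁿ⁾(A_l|A) = μ(A_l|A) if F̃⁽ⁿ⁾(A) = 0). Then the improvement D = ∑_{A∈ℒ(T)} F̃⁽ⁿ⁾(A) log(G(A)/μ(A)) satisfies D ≥ 0, with D > 0 unless F̃⁽ⁿ⁾(A) = μ(A) for all A ∈ ℒ(T). -/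
open MeasureTheory Set

/-- An axis-aligned half-open box `∏ⱼ (lo j, hi j]` in `ℝ^d`. -/
structure Box (d : ℕ) where
  lo : Fin d → ℝ
  hi : Fin d → ℝ

/-- The subset of `ℝ^d` represented by a box. -/
def Box.set {d : ℕ} (B : Box d) : Set (Fin d → ℝ) :=
  Set.univ.pi fun j => Ioc (B.lo j) (B.hi j)

/-- The left child obtained by splitting coordinate `j` at `s`. -/
def Box.left {d : ℕ} (B : Box d) (j : Fin d) (s : ℝ) : Box d :=
  ⟨B.lo, Function.update B.hi j s⟩

/-- The right child obtained by splitting coordinate `j` at `s`. -/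
def Box.right {d : ℕ} (B : Box d) (j : Fin d) (s : ℝ) : Box d :=
  ⟨Function.update B.lo j s, B.hi⟩

/-- A finite dyadic partition tree whose interior nodes carry the split coordinate `j`,
the split point `s` and the node-specific learning rate `c = c(A) ∈ (0,1]`. -/
inductive STree (d : ℕ) where
  | leaf : STree d
  | node (j : Fin d) (s c : ℝ) (l r : STree d) : STree d

/-- Validity: split points interior to the current box, learning rates in `(0,1]`. -/
def STree.valid {d : ℕ} : STree d → Box d → Prop
  | .leaf, B => ∀ i, B.lo i < B.hi i
  | .node j s c l r, B =>
      (∀ i, B.lo i < B.hi i) ∧ B.lo j < s ∧ s < B.hi j ∧ 0 < c ∧ c ≤ 1 ∧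
        l.valid (B.left j s) ∧ r.valid (B.right j s)

/-- The list of leaf boxes of the tree grown from box `B`. -/
def leafBoxes {d : ℕ} : STree d → Box d → List (Box d)
  | .leaf, B => [B]
  | .node j s _ l r, B => leafBoxes l (B.left j s) ++ leafBoxes r (B.right j s)

/-- The improvement `D = ∑_{A ∈ ℒ(T)} F̃(A) log (G(A)/μ(A))`, computed with accumulators
`gAcc` (the product of the shrunken conditionals `G(A_l|A) = (1−c(A))μ(A_l|A) + c(A)F̃(A_l|A)`
along the branch, i.e. `G(A)`) and `mAcc` (the product of the uniform conditionals,
i.e. `μ(A)`); the convention `F̃(A_l|A) = μ(A_l|A)` is used when `F̃(A) = 0`. -/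
noncomputable def improvement {d : ℕ} (Ft : Measure (Fin d → ℝ)) :
    STree d → Box d → ℝ → ℝ → ℝ
  | .leaf, B, gAcc, mAcc => (Ft B.set).toReal * Real.log (gAcc / mAcc)
  | .node j s c l r, B, gAcc, mAcc =>
      let Bl := B.left j s
      let Br := B.right j s
      let μl := (volume Bl.set).toReal / (volume B.set).toReal
      let fl := if Ft B.set = 0 then μl else (Ft Bl.set).toReal / (Ft B.set).toReal
      let θ := (1 - c) * μl + c * fl
      improvement Ft l Bl (gAcc * θ) (mAcc * μl) +
        improvement Ft r Br (gAcc * (1 - θ)) (mAcc * (1 - μl))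

/-- The unit box `(0,1]^d`. -/
def unitBox (d : ℕ) : Box d := ⟨fun _ => 0, fun _ => 1⟩

/-! At an interior node `A` with mass `F = F̃(A) > 0`, write `f = F̃(A_l|A)`, `μ = μ(A_l|A)` and
`θ = G(A_l|A) = (1 - c) μ + c f`. The leaf terms below `A_l` and `A_r` telescope to
`F log (g/m) + F (f log (θ/μ) + (1 - f) log ((1 - θ)/(1 - μ)))`, where `g` and `m` are the
values of `G` and `μ` at `A`, and concavity of `log` bounds the bracket below by
`c · KL(f ‖ μ) ≥ 0`, which vanishes only when `f = μ`. Induction over the tree gives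
`F̃(B) log (g/m) ≤ D` for the subtree at any node `B`, with equality only if `F̃` is
proportional to volume on the leaves below `B`. -/

open Real InformationTheory

namespace Box

variable {d : ℕ} (B : Box d) (j : Fin d) (s : ℝ)

lemma volume_set : volume B.set = ∏ i, ENNReal.ofReal (B.hi i - B.lo i) := by
  simp [Box.set, volume_pi_pi, Real.volume_Ioc]

lemma volume_set_ne_top : volume B.set ≠ ⊤ := by
  simp [volume_set, ENNReal.prod_ne_top]

lemma volume_real_set_pos (h : ∀ i, B.lo i < B.hi i) : 0 < volume.real B.set := by
  rw [measureReal_def, volume_set, ENNReal.toReal_prod]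
  exact Finset.prod_pos fun i _ => by
    rw [ENNReal.toReal_ofReal (sub_nonneg.2 (h i).le)]; exact sub_pos.2 (h i)

lemma left_set (h : s ≤ B.hi j) : (B.left j s).set = B.set ∩ {x | x j ≤ s} := by
  ext x
  simp only [Box.set, Box.left, mem_inter_iff, mem_univ_pi, mem_Ioc, mem_ofPred_eq]
  constructor
  · intro hx
    refine ⟨fun i => ⟨(hx i).1, (hx i).2.trans ?_⟩, by simpa using (hx j).2⟩
    rcases eq_or_ne i j with rfl | hij
    · simpa using h
    · simp [hij]
  · rintro ⟨hx, hxj⟩ i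
    refine ⟨(hx i).1, ?_⟩
    rcases eq_or_ne i j with rfl | hij
    · simpa using hxj
    · simpa [hij] using (hx i).2

lemma right_set (h : B.lo j ≤ s) : (B.right j s).set = B.set \ {x | x j ≤ s} := by
  ext x
  simp only [Box.set, Box.right, mem_sdiff, mem_univ_pi, mem_Ioc, mem_ofPred_eq, not_le]
  constructor
  · intro hx
    refine ⟨fun i => ⟨lt_of_le_of_lt ?_ (hx i).1, (hx i).2⟩, by simpa using (hx j).1⟩
    rcases eq_or_ne i j with rfl | hij
    · simpa using h
    · simp [hij]
  · rintro ⟨hx, hxj⟩ i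
    refine ⟨?_, (hx i).2⟩
    rcases eq_or_ne i j with rfl | hij
    · simpa using hxj
    · simpa [hij] using (hx i).1

lemma left_set_subset (h : s ≤ B.hi j) : (B.left j s).set ⊆ B.set :=
  B.left_set j s h ▸ inter_subset_left

lemma right_set_subset (h : B.lo j ≤ s) : (B.right j s).set ⊆ B.set :=
  B.right_set j s h ▸ sdiff_subset

lemma measureReal_set_eq_add (μ : Measure (Fin d → ℝ)) (h₁ : B.lo j ≤ s) (h₂ : s ≤ B.hi j)
    (hB : μ B.set ≠ ⊤) :
    μ.real B.set = μ.real (B.left j s).set + μ.real (B.right j s).set := by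
  rw [B.left_set j s h₂, B.right_set j s h₁,
    measureReal_inter_add_sdiff (measurableSet_le (measurable_pi_apply j) measurable_const) hB]

end Box

namespace STree

variable {d : ℕ}

lemma valid.lo_lt_hi : {T : STree d} → {B : Box d} → T.valid B → ∀ i, B.lo i < B.hi i
  | .leaf, _, h => h
  | .node .., _, h => h.1

lemma valid.subset_of_mem_leafBoxes {T : STree d} {B A : Box d} (hT : T.valid B)
    (hA : A ∈ leafBoxes T B) : A.set ⊆ B.set := by
  induction T generalizing B with
  | leaf =>
    rw [leafBoxes, List.mem_singleton] at hA
    exact hA ▸ subset_rfl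
  | node j s c l r ihl ihr =>
    obtain ⟨-, hlo, hhi, -, -, hl, hr⟩ := hT
    rcases List.mem_append.1 hA with hA | hA
    · exact (ihl hl hA).trans (B.left_set_subset j s hhi.le)
    · exact (ihr hr hA).trans (B.right_set_subset j s hlo.le)

end STree

noncomputable def binaryKL (f μ : ℝ) : ℝ := f * log (f / μ) + (1 - f) * log ((1 - f) / (1 - μ))

section binaryKL

variable {f μ c : ℝ}

lemma binaryKL_eq_klFun (hμ₀ : μ ≠ 0) (hμ₁ : μ ≠ 1) :
    binaryKL f μ = μ * klFun (f / μ) + (1 - μ) * klFun ((1 - f) / (1 - μ)) := by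
  have : 1 - μ ≠ 0 := sub_ne_zero.2 hμ₁.symm
  simp only [binaryKL, klFun_apply]
  field_simp
  ring

lemma binaryKL_nonneg (hf₀ : 0 ≤ f) (hf₁ : f ≤ 1) (hμ₀ : 0 < μ) (hμ₁ : μ < 1) :
    0 ≤ binaryKL f μ := by
  rw [binaryKL_eq_klFun hμ₀.ne' hμ₁.ne]
  exact add_nonneg (mul_nonneg hμ₀.le (klFun_nonneg (by positivity)))
    (mul_nonneg (by linarith) (klFun_nonneg (div_nonneg (by linarith) (by linarith))))

lemma binaryKL_eq_zero_iff (hf₀ : 0 ≤ f) (hf₁ : f ≤ 1) (hμ₀ : 0 < μ) (hμ₁ : μ < 1) :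
    binaryKL f μ = 0 ↔ f = μ := by
  refine ⟨fun h => ?_, fun h => ?_⟩
  · rw [binaryKL_eq_klFun hμ₀.ne' hμ₁.ne] at h
    have h₁ := mul_nonneg hμ₀.le (klFun_nonneg (div_nonneg hf₀ hμ₀.le))
    have h₂ := mul_nonneg (sub_nonneg.2 hμ₁.le)
      (klFun_nonneg (div_nonneg (sub_nonneg.2 hf₁) (sub_nonneg.2 hμ₁.le)))
    have hkl : klFun (f / μ) = 0 :=
      (mul_eq_zero.1 (by linarith : μ * klFun (f / μ) = 0)).resolve_left hμ₀.ne'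
    rwa [klFun_eq_zero_iff (div_nonneg hf₀ hμ₀.le), div_eq_one_iff_eq hμ₀.ne'] at hkl
  · have : 1 - μ ≠ 0 := by linarith
    simp [binaryKL, h, div_self hμ₀.ne', div_self this]

lemma mix_pos (hμ : 0 < μ) (hf : 0 < f) (hc₀ : 0 ≤ c) (hc₁ : c ≤ 1) :
    0 < (1 - c) * μ + c * f := by
  rcases hc₀.eq_or_lt with rfl | hc
  · simpa using hμ
  · exact add_pos_of_nonneg_of_pos (mul_nonneg (sub_nonneg.2 hc₁) hμ.le) (mul_pos hc hf)

lemma one_sub_mix (c μ f : ℝ) :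
    1 - ((1 - c) * μ + c * f) = (1 - c) * (1 - μ) + c * (1 - f) := by
  ring

lemma mix_ne_zero (hμ : 0 < μ) (hf₀ : 0 ≤ f) (hf : f ≠ 0) (hc₀ : 0 ≤ c) (hc₁ : c ≤ 1) :
    (1 - c) * μ + c * f ≠ 0 :=
  (mix_pos hμ (hf₀.lt_of_ne' hf) hc₀ hc₁).ne'

lemma one_sub_mix_ne_zero (hμ : μ < 1) (hf₁ : f ≤ 1) (hf : 1 - f ≠ 0) (hc₀ : 0 ≤ c)
    (hc₁ : c ≤ 1) : 1 - ((1 - c) * μ + c * f) ≠ 0 := by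
  rw [one_sub_mix]
  exact mix_ne_zero (sub_pos.2 hμ) (sub_nonneg.2 hf₁) hf hc₀ hc₁

lemma mul_mul_log_div_le (hf : 0 ≤ f) (hμ : 0 < μ) (hc₀ : 0 ≤ c) (hc₁ : c ≤ 1) :
    c * (f * log (f / μ)) ≤ f * log (((1 - c) * μ + c * f) / μ) := by
  rcases hf.eq_or_lt with rfl | hf
  · simp
  have hmix := mix_pos hμ hf hc₀ hc₁
  have hconc : (1 - c) * log μ + c * log f ≤ log ((1 - c) * μ + c * f) := by
    simpa [smul_eq_mul] using
      strictConcaveOn_log_Ioi.concaveOn.2 (mem_Ioi.2 hμ) (mem_Ioi.2 hf) (by linarith) hc₀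
        (by ring)
  rw [log_div hf.ne' hμ.ne', log_div hmix.ne' hμ.ne']
  linear_combination f * hconc

lemma mul_binaryKL_le (hf₀ : 0 ≤ f) (hf₁ : f ≤ 1) (hμ₀ : 0 < μ) (hμ₁ : μ < 1)
    (hc₀ : 0 ≤ c) (hc₁ : c ≤ 1) :
    c * binaryKL f μ ≤ f * log (((1 - c) * μ + c * f) / μ) +
      (1 - f) * log ((1 - ((1 - c) * μ + c * f)) / (1 - μ)) := by
  have h₁ := mul_mul_log_div_le hf₀ hμ₀ hc₀ hc₁
  have h₂ := mul_mul_log_div_le (sub_nonneg.2 hf₁) (sub_pos.2 hμ₁) hc₀ hc₁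
  rw [binaryKL, one_sub_mix]
  linarith

end binaryKL

lemma mul_log_mul_div_mul {x g m t u : ℝ} (hg : g ≠ 0) (hm : m ≠ 0) (hu : u ≠ 0)
    (ht : x ≠ 0 → t ≠ 0) : x * log (g * t / (m * u)) = x * log (g / m) + x * log (t / u) := by
  rcases eq_or_ne x 0 with rfl | hx
  · simp
  rw [mul_div_mul_comm, log_mul (div_ne_zero hg hm) (div_ne_zero (ht hx) hu), mul_add]

/- The right side is what the two children of a node of mass `F` contribute to the improvement,
`f` and `μ` being the left fractions of `F̃` and of volume. -/
lemma add_mul_binaryKL_le {F f g m μ c : ℝ} (hF : 0 ≤ F) (hf₀ : 0 ≤ f) (hf₁ : f ≤ 1)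
    (hg : g ≠ 0) (hm : m ≠ 0) (hμ₀ : 0 < μ) (hμ₁ : μ < 1) (hc₀ : 0 ≤ c) (hc₁ : c ≤ 1) :
    F * log (g / m) + F * (c * binaryKL f μ) ≤
      F * f * log (g * ((1 - c) * μ + c * f) / (m * μ)) +
        F * (1 - f) * log (g * (1 - ((1 - c) * μ + c * f)) / (m * (1 - μ))) := by
  rw [mul_log_mul_div_mul hg hm hμ₀.ne' fun h =>
      mix_ne_zero hμ₀ hf₀ (right_ne_zero_of_mul h) hc₀ hc₁,
    mul_log_mul_div_mul hg hm (sub_pos.2 hμ₁).ne' fun h =>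
      one_sub_mix_ne_zero hμ₁ hf₁ (right_ne_zero_of_mul h) hc₀ hc₁]
  linear_combination mul_le_mul_of_nonneg_left (mul_binaryKL_le hf₀ hf₁ hμ₀ hμ₁ hc₀ hc₁) hF

lemma div_mem_Icc_of_eq_add {a b c : ℝ} (ha : 0 ≤ a) (hb : 0 ≤ b) (h : c = a + b) :
    a / c ∈ Icc 0 1 :=
  ⟨div_nonneg ha (h ▸ add_nonneg ha hb),
    div_le_one_of_le₀ (h ▸ le_add_of_nonneg_right hb) (h ▸ add_nonneg ha hb)⟩

lemma div_mem_Ioo_of_eq_add {a b c : ℝ} (ha : 0 < a) (hb : 0 < b) (h : c = a + b) :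
    a / c ∈ Ioo 0 1 :=
  ⟨div_pos ha (h ▸ add_pos ha hb),
    (div_lt_one (h ▸ add_pos ha hb)).2 (h ▸ lt_add_of_pos_right a hb)⟩

lemma mul_eq_mul_of_div_eq_div_of_eq_add {a b c x y z : ℝ} (hc : c = a + b) (hz : z = x + y)
    (hc₀ : c ≠ 0) (hz₀ : z ≠ 0) (h : a / c = x / z) : a * z = c * x ∧ b * z = c * y := by
  rw [div_eq_div_iff hc₀ hz₀] at h
  exact ⟨by linear_combination h, by linear_combination c * hz - z * hc - h⟩

lemma mul_eq_mul_of_mul_eq_mul {a b x y z w : ℝ} (hy : y ≠ 0) (h₁ : a * y = x * b)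
    (h₂ : x * w = z * y) : a * w = z * b :=
  mul_right_cancel₀ hy (by linear_combination w * h₁ + b * h₂)

section improvement

variable {d : ℕ} (Ft : Measure (Fin d → ℝ))

lemma improvement_eq_zero_of_measure_eq_zero {T : STree d} {B : Box d} (hT : T.valid B)
    (hB : Ft B.set = 0) (g m : ℝ) : improvement Ft T B g m = 0 := by
  induction T generalizing B g m with
  | leaf => simp [improvement, hB]
  | node j s c l r ihl ihr =>
    obtain ⟨-, hlo, hhi, -, -, hl, hr⟩ := hT
    simp only [improvement]
    rw [ihl hl (measure_mono_null (B.left_set_subset j s hhi.le) hB),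
      ihr hr (measure_mono_null (B.right_set_subset j s hlo.le) hB), add_zero]

variable [IsFiniteMeasure Ft]

/- `G(A_l|A)` vanishes when `c = 1` and `F̃(A_l) = 0`, so an accumulator may become `0`; this
happens only on subtrees without mass, where the junk value `log 0 = 0` is multiplied by `0`. -/
theorem mul_log_div_le_improvement {T : STree d} {B : Box d} (hT : T.valid B) {g m : ℝ}
    (hg : Ft.real B.set ≠ 0 → g ≠ 0) (hm : m ≠ 0) :
    Ft.real B.set * log (g / m) ≤ improvement Ft T B g m ∧
      (improvement Ft T B g m = Ft.real B.set * log (g / m) → ∀ A ∈ leafBoxes T B,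
        Ft.real A.set * volume.real B.set = Ft.real B.set * volume.real A.set) := by
  induction T generalizing B g m with
  | leaf =>
    refine ⟨le_rfl, fun _ A hA => ?_⟩
    rw [leafBoxes, List.mem_singleton] at hA
    rw [hA, mul_comm]
  | node j s c l r ihl ihr =>
    by_cases hF : Ft.real B.set = 0
    · have hB : Ft B.set = 0 := (measureReal_eq_zero_iff (measure_ne_top _ _)).1 hF
      rw [improvement_eq_zero_of_measure_eq_zero Ft hT hB, hF, zero_mul]
      refine ⟨le_rfl, fun _ A hA => ?_⟩
      rw [measureReal_mono_null (hT.subset_of_mem_leafBoxes hA) hF, zero_mul, zero_mul]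
    obtain ⟨-, hlo, hhi, hc₀, hc₁, hl, hr⟩ := hT
    have hB : Ft B.set ≠ 0 := mt (measureReal_eq_zero_iff (measure_ne_top _ _)).2 hF
    simp only [improvement, if_neg hB, ← measureReal_def]
    set Bl := B.left j s
    set Br := B.right j s
    set μl := volume.real Bl.set / volume.real B.set
    set fl := Ft.real Bl.set / Ft.real B.set
    set θ := (1 - c) * μl + c * fl
    have hvB := B.measureReal_set_eq_add j s volume hlo.le hhi.le B.volume_set_ne_top
    have hFB := B.measureReal_set_eq_add j s Ft hlo.le hhi.le (measure_ne_top _ _)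
    have hvl := Bl.volume_real_set_pos hl.lo_lt_hi
    have hvr := Br.volume_real_set_pos hr.lo_lt_hi
    obtain ⟨hμl₀, hμl₁⟩ : μl ∈ Ioo 0 1 := div_mem_Ioo_of_eq_add hvl hvr hvB
    obtain ⟨hfl₀, hfl₁⟩ : fl ∈ Icc 0 1 :=
      div_mem_Icc_of_eq_add measureReal_nonneg measureReal_nonneg hFB
    have hFpos : 0 < Ft.real B.set := measureReal_nonneg.lt_of_ne' hF
    have hFl : Ft.real B.set * fl = Ft.real Bl.set := mul_div_cancel₀ _ hF
    have hFr : Ft.real B.set * (1 - fl) = Ft.real Br.set := by linear_combination hFB - hFl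
    have hnode := add_mul_binaryKL_le hFpos.le hfl₀ hfl₁ (hg hF) hm hμl₀ hμl₁ hc₀.le hc₁
    rw [hFl, hFr] at hnode
    have hθ : Ft.real Bl.set ≠ 0 → θ ≠ 0 := fun h =>
      mix_ne_zero hμl₀ hfl₀ (right_ne_zero_of_mul (hFl ▸ h)) hc₀.le hc₁
    have hθ' : Ft.real Br.set ≠ 0 → 1 - θ ≠ 0 := fun h =>
      one_sub_mix_ne_zero hμl₁ hfl₁ (right_ne_zero_of_mul (hFr ▸ h)) hc₀.le hc₁
    obtain ⟨ihl₁, ihl₂⟩ := ihl hl (fun h => mul_ne_zero (hg hF) (hθ h)) (mul_ne_zero hm hμl₀.ne')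
    obtain ⟨ihr₁, ihr₂⟩ := ihr hr (fun h => mul_ne_zero (hg hF) (hθ' h))
      (mul_ne_zero hm (sub_pos.2 hμl₁).ne')
    have hKL := binaryKL_nonneg hfl₀ hfl₁ hμl₀ hμl₁
    have hgain := mul_nonneg hFpos.le (mul_nonneg hc₀.le hKL)
    refine ⟨by linarith, fun heq A hA => ?_⟩
    have hflμ : fl = μl := (binaryKL_eq_zero_iff hfl₀ hfl₁ hμl₀ hμl₁).1 <| le_antisymm
      (nonpos_of_mul_nonpos_right (nonpos_of_mul_nonpos_right (by linarith) hFpos) hc₀) hKL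
    obtain ⟨hFlv, hFrv⟩ := mul_eq_mul_of_div_eq_div_of_eq_add hFB hvB hF (by linarith) hflμ
    rcases List.mem_append.1 hA with hA | hA
    · exact mul_eq_mul_of_mul_eq_mul hvl.ne' (ihl₂ (by linarith) A hA) hFlv
    · exact mul_eq_mul_of_mul_eq_mul hvr.ne' (ihr₂ (by linarith) A hA) hFrv

end improvement

/-- For a finite valid dyadic tree `T` on `(0,1]^d`, a probability measure
`F̃⁽ⁿ⁾` on `(0,1]^d`, and `G ∈ 𝒫_T` defined by the shrunken conditionals
`G(A_l|A) = (1−c(A))μ(A_l|A) + c(A)F̃⁽ⁿ⁾(A_l|A)` with `c(A) ∈ (0,1]`, the improvement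
`D = ∑_{A ∈ ℒ(T)} F̃⁽ⁿ⁾(A) log (G(A)/μ(A))` satisfies `D ≥ 0`, and `D > 0` unless
`F̃⁽ⁿ⁾(A) = μ(A)` for all leaves `A ∈ ℒ(T)`. -/
theorem stmt14
    {d : ℕ} (T : STree d) (hT : T.valid (unitBox d))
    (Ft : Measure (Fin d → ℝ)) [IsProbabilityMeasure Ft]
    (hFt : Ft (unitBox d).set = 1) :
    0 ≤ improvement Ft T (unitBox d) 1 1 ∧
      (improvement Ft T (unitBox d) 1 1 = 0 →
        ∀ B ∈ leafBoxes T (unitBox d), Ft B.set = volume B.set) := by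
  have hvol : volume.real (unitBox d).set = 1 := by simp [measureReal_def, Box.volume_set, unitBox]
  have hmass : Ft.real (unitBox d).set = 1 := by simp [measureReal_def, hFt]
  obtain ⟨hle, heq⟩ := mul_log_div_le_improvement Ft hT (fun _ => one_ne_zero) one_ne_zero
  rw [div_one, log_one, mul_zero] at hle heq
  refine ⟨hle, fun hD B hB => ?_⟩
  have hB := heq hD B hB
  rw [hvol, hmass, mul_one, one_mul] at hB
  exact (ENNReal.toReal_eq_toReal_iff' (measure_ne_top Ft _) B.volume_set_ne_top).1 hB
end

section
/- Let 𝐆 be a piecewise affine strictly increasing bijection of (0,1] that is the CDF of a two-leaf tree measure G with split point c₁ and left mass α, and let F be a probability measure with piecewise constant density f = ∑_{i=1}^I β_i 1_{(c_{i−1},c_i]}. If α satisfies (1−α)/α = (β₂/β₁)·(1−c₁)/c₁, then the pushforward 𝐆#F has density g(x) = (c₁/α)β₁ on (0, 𝐆(c₂)], and (so the first two pieces merge into one constant piece), and g is piecewise constant with I−1 pieces on the partition points 𝐆(c₂) < ⋯ < 𝐆(c_{I−1}) < 1. -/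
/-!
On `(-∞, c₁]` and on `[c₁, ∞)` the CDF `𝐆` is affine with slopes `α / c₁` and
`(1 - α) / (1 - c₁)`, and an affine map of slope `m > 0` pushes `r • λ|(a, b]` to
`(r / m) • λ|(𝐆 a, 𝐆 b]`. So `𝐆#F` is again piecewise constant on the image partition, the
piece on `(c₀, c₁]` being rescaled by `c₁ / α` and all later ones by `(1 - c₁) / (1 - α)`.
The relation defining `α` says precisely that the first two rescaled values coincide, so these
two pieces merge into one on `(0, 𝐆 c₂]`.
-/

open MeasureTheory Set
open scoped ENNReal

namespace MeasureTheory

section WithDensity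

variable {α ι : Type*} [MeasurableSpace α] {μ : Measure α}

theorem withDensity_finset_sum {s : Finset ι} {f : ι → α → ℝ≥0∞}
    (hf : ∀ i ∈ s, Measurable (f i)) :
    μ.withDensity (fun x => ∑ i ∈ s, f i x) = ∑ i ∈ s, μ.withDensity (f i) := by
  classical
  induction s using Finset.induction_on with
  | empty => simp
  | insert a s ha ih =>
    simp only [Finset.sum_insert ha]
    rw [← ih fun i hi => hf i (Finset.mem_insert_of_mem hi),
      ← withDensity_add_left (hf a (Finset.mem_insert_self a s))]
    rfl

theorem withDensity_indicator_const {s : Set α} (hs : MeasurableSet s) (r : ℝ≥0∞) :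
    μ.withDensity (s.indicator fun _ => r) = r • μ.restrict s := by
  rw [withDensity_indicator hs, withDensity_const]

end WithDensity

theorem Measure.restrict_Ioc_add_restrict_Ioc {α : Type*} [LinearOrder α] [TopologicalSpace α]
    [OrderClosedTopology α] [MeasurableSpace α] [OpensMeasurableSpace α] (μ : Measure α)
    {a b c : α} (hab : a ≤ b) (hbc : b ≤ c) :
    μ.restrict (Ioc a b) + μ.restrict (Ioc b c) = μ.restrict (Ioc a c) := by
  rw [← Measure.restrict_union (Ioc_disjoint_Ioc_of_le le_rfl) measurableSet_Ioc,
    Ioc_union_Ioc_eq_Ioc hab hbc]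

end MeasureTheory

theorem Real.map_volume_affine {m : ℝ} (hm : m ≠ 0) (k : ℝ) :
    volume.map (fun x => m * x + k) = ENNReal.ofReal |m⁻¹| • volume := by
  rw [show (fun x => m * x + k) = (· + k) ∘ (m * ·) from rfl,
    ← Measure.map_map (by fun_prop) (by fun_prop), Real.map_volume_mul_left hm,
    Measure.map_smul, map_add_right_eq_self]

theorem Real.map_volume_restrict_Ioc_affine {m : ℝ} (hm : 0 < m) (k a b : ℝ) :
    (volume.restrict (Ioc a b)).map (fun x => m * x + k)
      = ENNReal.ofReal m⁻¹ • volume.restrict (Ioc (m * a + k) (m * b + k)) := by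
  have hpre : (fun x => m * x + k) ⁻¹' Ioc (m * a + k) (m * b + k) = Ioc a b := by
    ext x
    simp [mul_lt_mul_iff_right₀ hm, mul_le_mul_iff_right₀ hm]
  rw [← hpre, ← Measure.restrict_map (by fun_prop) measurableSet_Ioc,
    Real.map_volume_affine hm.ne', Measure.restrict_smul, abs_of_pos (inv_pos.2 hm)]

theorem Real.map_smul_volume_restrict_Ioc_of_eqOn {g : ℝ → ℝ} {m k a b : ℝ} (hm : 0 < m)
    (hab : a ≤ b) (hg : EqOn g (fun x => m * x + k) (Icc a b)) (r : ℝ) :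
    (ENNReal.ofReal r • volume.restrict (Ioc a b)).map g
      = ENNReal.ofReal (m⁻¹ * r) • volume.restrict (Ioc (g a) (g b)) := by
  have hae : g =ᵐ[volume.restrict (Ioc a b)] fun x => m * x + k :=
    (ae_restrict_iff' measurableSet_Ioc).2 (ae_of_all _ fun x hx => hg (Ioc_subset_Icc_self hx))
  rw [Measure.map_smul, Measure.map_congr hae, Real.map_volume_restrict_Ioc_affine hm,
    hg (left_mem_Icc.2 hab), hg (right_mem_Icc.2 hab), smul_smul,
    ENNReal.ofReal_mul (inv_nonneg.2 hm.le), mul_comm]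

noncomputable def twoLeafCDF (c₁ α : ℝ) (x : ℝ) : ℝ :=
  if x ≤ c₁ then α / c₁ * x else α + (1 - α) / (1 - c₁) * (x - c₁)

section TwoLeafCDF

variable {c₁ α : ℝ}

theorem twoLeafCDF_eqOn_Iic : EqOn (twoLeafCDF c₁ α) (fun x => α / c₁ * x + 0) (Iic c₁) :=
  fun x hx => by simp [twoLeafCDF, mem_Iic.1 hx]

theorem twoLeafCDF_eqOn_Ici (hc₁ : c₁ ≠ 0) :
    EqOn (twoLeafCDF c₁ α)
      (fun x => (1 - α) / (1 - c₁) * x + (α - (1 - α) / (1 - c₁) * c₁)) (Ici c₁) := by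
  intro x hx
  rcases (mem_Ici.1 hx).eq_or_lt with rfl | hlt
  · simp [twoLeafCDF, div_mul_cancel₀ _ hc₁]
  · simp only [twoLeafCDF, if_neg (not_le.2 hlt)]
    ring

theorem twoLeafCDF_zero (hc₁ : 0 ≤ c₁) : twoLeafCDF c₁ α 0 = 0 := by
  simp [twoLeafCDF, hc₁]

theorem measurable_twoLeafCDF : Measurable (twoLeafCDF c₁ α) :=
  Measurable.ite measurableSet_Iic (by fun_prop) (by fun_prop)

theorem monotone_twoLeafCDF (hc₁ : 0 < c₁) (hc₁' : c₁ ≤ 1) (hα : 0 ≤ α) (hα' : α ≤ 1) :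
    Monotone (twoLeafCDF c₁ α) := by
  refine MonotoneOn.Iic_union_Ici (a := c₁) ?_ ?_
  · refine MonotoneOn.congr ?_ twoLeafCDF_eqOn_Iic.symm
    exact (monotone_id.const_mul (div_nonneg hα hc₁.le)).add_const _ |>.monotoneOn _
  · refine MonotoneOn.congr ?_ (twoLeafCDF_eqOn_Ici hc₁.ne').symm
    exact (monotone_id.const_mul (div_nonneg (by linarith) (by linarith))).add_const _
      |>.monotoneOn _

theorem map_twoLeafCDF_of_le (hc₁ : 0 < c₁) (hα : 0 < α) {a b : ℝ} (hab : a ≤ b)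
    (hb : b ≤ c₁) (r : ℝ) :
    (ENNReal.ofReal r • volume.restrict (Ioc a b)).map (twoLeafCDF c₁ α)
      = ENNReal.ofReal (c₁ / α * r)
          • volume.restrict (Ioc (twoLeafCDF c₁ α a) (twoLeafCDF c₁ α b)) := by
  rw [Real.map_smul_volume_restrict_Ioc_of_eqOn (div_pos hα hc₁) hab
    (twoLeafCDF_eqOn_Iic.mono fun x hx => hx.2.trans hb), inv_div]

theorem map_twoLeafCDF_of_ge (hc₁ : c₁ ≠ 0) (hc₁' : c₁ < 1) (hα' : α < 1) {a b : ℝ}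
    (hab : a ≤ b) (ha : c₁ ≤ a) (r : ℝ) :
    (ENNReal.ofReal r • volume.restrict (Ioc a b)).map (twoLeafCDF c₁ α)
      = ENNReal.ofReal ((1 - c₁) / (1 - α) * r)
          • volume.restrict (Ioc (twoLeafCDF c₁ α a) (twoLeafCDF c₁ α b)) := by
  rw [Real.map_smul_volume_restrict_Ioc_of_eqOn (div_pos (by linarith) (by linarith)) hab
    ((twoLeafCDF_eqOn_Ici hc₁).mono fun x hx => ha.trans hx.1), inv_div]

end TwoLeafCDF

theorem stmt16_general
    (I : ℕ) (hI : 2 ≤ I) (c : ℕ → ℝ) (β : ℕ → ℝ) (α : ℝ)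
    (hc0 : c 0 = 0) (hcI : c I = 1) (hcmono : ∀ i < I, c i < c (i + 1))
    (hβ : ∀ i < I, 0 < β i) (hα : α ∈ Ioo (0:ℝ) 1)
    (hαeq : (1 - α) / α = β 1 / β 0 * ((1 - c 1) / c 1))
    (Gf : ℝ → ℝ)
    (hGf : ∀ x, Gf x = if x ≤ c 1 then α / c 1 * x
      else α + (1 - α) / (1 - c 1) * (x - c 1))
    (F : Measure ℝ)
    (hF : F = volume.withDensity fun x =>
      ∑ i ∈ Finset.range I,
        Set.indicator (Ioc (c i) (c (i + 1))) (fun _ => ENNReal.ofReal (β i)) x) :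
    Measure.map Gf F = volume.withDensity fun y =>
      Set.indicator (Ioc (0:ℝ) (Gf (c 2)))
          (fun _ => ENNReal.ofReal (c 1 / α * β 0)) y +
        ∑ i ∈ Finset.Ico 2 I,
          Set.indicator (Ioc (Gf (c i)) (Gf (c (i + 1))))
            (fun _ => ENNReal.ofReal ((1 - c 1) / (1 - α) * β i)) y := by
  obtain ⟨hα0, hα1⟩ := hα
  obtain rfl : Gf = twoLeafCDF (c 1) α := funext hGf
  have hc : MonotoneOn c (Iic I) := (strictMonoOn_Iic_of_lt_succ hcmono).monotoneOn
  have hc₁ : 0 < c 1 := hc0 ▸ hcmono 0 (by omega)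
  have hc₁' : c 1 < 1 :=
    hcI ▸ (hcmono 1 (by omega)).trans_le (hc (mem_Iic.2 hI) (mem_Iic.2 le_rfl) hI)
  have hG := monotone_twoLeafCDF hc₁ hc₁'.le hα0.le hα1.le
  -- the choice of `α` makes the transformed densities of the first two pieces agree
  have hmerge : (1 - c 1) / (1 - α) * β 1 = c 1 / α * β 0 := by
    have := hβ 0 (by omega)
    field_simp at hαeq ⊢
    linear_combination -hαeq
  rw [hF, withDensity_finset_sum fun i _ => measurable_const.indicator measurableSet_Ioc,
    Measure.map_finset_sum measurable_twoLeafCDF.aemeasurable,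
    ← Finset.sum_range_add_sum_Ico _ hI, Finset.sum_range_succ, Finset.sum_range_one,
    ← Pi.add_def, withDensity_add_left (measurable_const.indicator measurableSet_Ioc),
    withDensity_finset_sum fun i _ => measurable_const.indicator measurableSet_Ioc]
  simp only [withDensity_indicator_const measurableSet_Ioc]
  rw [map_twoLeafCDF_of_le hc₁ hα0 (hcmono 0 (by omega)).le le_rfl,
    map_twoLeafCDF_of_ge hc₁.ne' hc₁' hα1 (hcmono 1 (by omega)).le le_rfl, hmerge, ← smul_add,
    Measure.restrict_Ioc_add_restrict_Ioc _ (hG (hcmono 0 (by omega)).le)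
      (hG (hcmono 1 (by omega)).le), hc0, twoLeafCDF_zero hc₁.le]
  congr 1
  refine Finset.sum_congr rfl fun i hi => ?_
  obtain ⟨h2i, hiI⟩ := Finset.mem_Ico.1 hi
  exact map_twoLeafCDF_of_ge hc₁.ne' hc₁' hα1 (hcmono i hiI).le
    (hc (mem_Iic.2 (by omega)) (mem_Iic.2 hiI.le) (by omega)) _

/-- Let `Gf` be the piecewise affine strictly increasing CDF of a two-leaf
tree measure on `(0,1]` with split point `c 1` and left mass `α`, and let `F` have
piecewise constant density `∑_{i<I} β i · 1_{(c i, c (i+1)]}` (with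
`0 = c 0 < c 1 < ⋯ < c I = 1`, `β i > 0`).  If `(1−α)/α = (β 1/β 0)·(1 − c 1)/(c 1)`,
then the pushforward `Gf#F` has density `(c 1/α)·β 0` on `(0, Gf (c 2)]` (the first two
pieces merge) and is piecewise constant with `I − 1` pieces, taking the value
`((1 − c 1)/(1 − α))·β i` on `(Gf (c i), Gf (c (i+1))]` for `i = 2, …, I−1`. -/
theorem stmt16
    (I : ℕ) (hI : 2 ≤ I) (c : ℕ → ℝ) (β : ℕ → ℝ) (α : ℝ)
    (hc0 : c 0 = 0) (hcI : c I = 1) (hcmono : ∀ i < I, c i < c (i + 1))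
    (hβ : ∀ i < I, 0 < β i) (hα : α ∈ Ioo (0:ℝ) 1)
    (hαeq : (1 - α) / α = β 1 / β 0 * ((1 - c 1) / c 1))
    (Gf : ℝ → ℝ)
    (hGf : ∀ x, Gf x = if x ≤ c 1 then α / c 1 * x
      else α + (1 - α) / (1 - c 1) * (x - c 1))
    (F : Measure ℝ) [IsProbabilityMeasure F]
    (hF : F = volume.withDensity fun x =>
      ∑ i ∈ Finset.range I,
        Set.indicator (Ioc (c i) (c (i + 1))) (fun _ => ENNReal.ofReal (β i)) x) :
    Measure.map Gf F = volume.withDensity fun y =>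
      Set.indicator (Ioc (0:ℝ) (Gf (c 2)))
          (fun _ => ENNReal.ofReal (c 1 / α * β 0)) y +
        ∑ i ∈ Finset.Ico 2 I,
          Set.indicator (Ioc (Gf (c i)) (Gf (c (i + 1))))
            (fun _ => ENNReal.ofReal ((1 - c 1) / (1 - α) * β i)) y :=
  stmt16_general I hI c β α hc0 hcI hcmono hβ hα hαeq Gf hGf F hF
end

section
/- Let F* be a probability measure on (0,1]^d with a bounded density f* ≤ M. Then for every ε > 0 there exists a probability measure G with strictly positive piecewise constant density on a finite rectangular partition of (0,1]^d such that KL(F* ‖ G) < ε. -/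
/-!
Approximate `f` in `L¹((0,1]^d)` by a nonnegative step function `h` on the grid of cubes of
side `1/N` (first by a continuous compactly supported function, then by its values at the cube
corners, using uniform continuity). For `δ > 0` the density `g = (h + δ) / C`, `C = ∫ h + δ`, is
a positive grid step function of mass one, and `log t ≤ t - 1` gives pointwise
`f log (f / g) ≤ (M / δ) |f - h| + f log C`. Integrating against `∫ f = 1`,
`KL(F*‖G) ≤ (M / δ) ‖f - h‖₁ + log C`, while `log C ≤ C - 1 ≤ ‖f - h‖₁ + δ`.
-/

open MeasureTheory Set

section Grid

variable {d : ℕ}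

def unitCube (d : ℕ) : Set (Fin d → ℝ) := univ.pi fun _ => Ioc 0 1

def gridCell (N : ℕ) (k : Fin d → Fin N) : Set (Fin d → ℝ) :=
  univ.pi fun j => Ioc ((k j : ℝ) / N) (((k j : ℝ) + 1) / N)

noncomputable def gridCorner (N : ℕ) (k : Fin d → Fin N) : Fin d → ℝ :=
  fun j => ((k j : ℝ) + 1) / N

theorem measurableSet_unitCube : MeasurableSet (unitCube d) :=
  MeasurableSet.univ_pi fun _ => measurableSet_Ioc

theorem measurableSet_gridCell (N : ℕ) (k : Fin d → Fin N) : MeasurableSet (gridCell N k) :=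
  MeasurableSet.univ_pi fun _ => measurableSet_Ioc

instance : IsProbabilityMeasure (volume.restrict (unitCube d)) :=
  ⟨by simp [unitCube, volume_pi_pi, Real.volume_Ioc]⟩

theorem gridCell_subset_unitCube (N : ℕ) (k : Fin d → Fin N) : gridCell N k ⊆ unitCube d := by
  intro x hx j _
  have hN : (0 : ℝ) < N := by exact_mod_cast (k j).pos
  have hk : (k j : ℝ) + 1 ≤ N := by exact_mod_cast (k j).isLt
  obtain ⟨hlo, hhi⟩ := hx j (mem_univ j)
  exact ⟨(div_nonneg (Nat.cast_nonneg _) hN.le).trans_lt hlo,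
    hhi.trans ((div_le_one hN).2 hk)⟩

theorem gridCorner_mem_gridCell (N : ℕ) (k : Fin d → Fin N) : gridCorner N k ∈ gridCell N k :=
  fun j _ => ⟨div_lt_div_of_pos_right (lt_add_one _) (by exact_mod_cast (k j).pos), le_rfl⟩

theorem dist_le_of_mem_gridCell {N : ℕ} {k : Fin d → Fin N} {x y : Fin d → ℝ}
    (hx : x ∈ gridCell N k) (hy : y ∈ gridCell N k) : dist x y ≤ 1 / N := by
  refine (dist_pi_le_iff (by positivity)).2 fun j => ?_
  obtain ⟨hx₁, hx₂⟩ := hx j (mem_univ j)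
  obtain ⟨hy₁, hy₂⟩ := hy j (mem_univ j)
  have hside : ((k j : ℝ) + 1) / N - (k j : ℝ) / N = 1 / N := by rw [add_div, add_sub_cancel_left]
  rw [Real.dist_eq, abs_le]
  constructor <;> linarith

theorem pairwise_disjoint_gridCell (N : ℕ) :
    Pairwise fun k k' : Fin d → Fin N => Disjoint (gridCell N k) (gridCell N k') := by
  intro k k' hne
  obtain ⟨j, hj⟩ := Function.ne_iff.1 hne
  have hN : (0 : ℝ) < N := by exact_mod_cast (k j).pos
  have key : ∀ {a b : Fin N} {t : ℝ}, a < b → t ≤ ((a : ℝ) + 1) / N → (b : ℝ) / N < t → False := by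
    intro a b t hab h₁ h₂
    have : ((a : ℝ) + 1) / N ≤ (b : ℝ) / N := by gcongr; exact_mod_cast hab
    linarith
  refine Set.disjoint_left.2 fun x hx hx' => ?_
  obtain ⟨hx₁, hx₂⟩ := hx j (mem_univ j)
  obtain ⟨hx₁', hx₂'⟩ := hx' j (mem_univ j)
  rcases lt_or_gt_of_ne hj with h | h
  · exact key h hx₂ hx₁'
  · exact key h hx₂' hx₁

theorem exists_mem_gridCell {N : ℕ} (hN : 0 < N) {x : Fin d → ℝ} (hx : x ∈ unitCube d) :
    ∃ k : Fin d → Fin N, x ∈ gridCell N k := by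
  have hN' : (0 : ℝ) < N := by exact_mod_cast hN
  have hceil : ∀ j, 1 ≤ ⌈x j * N⌉₊ ∧ ⌈x j * N⌉₊ ≤ N := fun j => by
    obtain ⟨h₀, h₁⟩ := hx j (mem_univ j)
    exact ⟨Nat.one_le_ceil_iff.2 (by positivity),
      Nat.ceil_le.2 (by nlinarith)⟩
  refine ⟨fun j => ⟨⌈x j * N⌉₊ - 1, by have := hceil j; omega⟩, fun j _ => ?_⟩
  have hcast : ((⌈x j * N⌉₊ - 1 : ℕ) : ℝ) = ⌈x j * N⌉₊ - 1 := by
    rw [Nat.cast_sub (hceil j).1, Nat.cast_one]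
  simp only [mem_Ioc, hcast, sub_add_cancel]
  constructor
  · rw [div_lt_iff₀ hN']
    linarith [Nat.ceil_lt_add_one (mul_pos (hx j (mem_univ j)).1 hN').le]
  · rw [le_div_iff₀ hN']
    exact Nat.le_ceil _

theorem iUnion_gridCell {N : ℕ} (hN : 0 < N) : ⋃ k : Fin d → Fin N, gridCell N k = unitCube d :=
  (iUnion_subset (gridCell_subset_unitCube N)).antisymm fun _ hx =>
    mem_iUnion.2 (exists_mem_gridCell hN hx)

end Grid

section GridStep

variable {d N : ℕ}

noncomputable def gridStep (N : ℕ) (a : (Fin d → Fin N) → ℝ) (x : Fin d → ℝ) : ℝ :=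
  ∑ k, (gridCell N k).indicator (fun _ => a k) x

theorem gridStep_eq_of_mem {a : (Fin d → Fin N) → ℝ} {k : Fin d → Fin N} {x : Fin d → ℝ}
    (hx : x ∈ gridCell N k) : gridStep N a x = a k := by
  rw [gridStep, Finset.sum_eq_single k (fun k' _ hk' => indicator_of_notMem
      (fun hx' => Set.disjoint_left.1 (pairwise_disjoint_gridCell N hk') hx' hx) _)
    (fun hk => (hk (Finset.mem_univ k)).elim), indicator_of_mem hx]

theorem gridStep_comp (hN : 0 < N) (φ : ℝ → ℝ) (a : (Fin d → Fin N) → ℝ) {x : Fin d → ℝ}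
    (hx : x ∈ unitCube d) : gridStep N (fun k => φ (a k)) x = φ (gridStep N a x) := by
  obtain ⟨k, hk⟩ := exists_mem_gridCell hN hx
  rw [gridStep_eq_of_mem hk, gridStep_eq_of_mem hk]

theorem gridStep_nonneg {a : (Fin d → Fin N) → ℝ} (ha : ∀ k, 0 ≤ a k) (x : Fin d → ℝ) :
    0 ≤ gridStep N a x :=
  Finset.sum_nonneg fun k _ => indicator_nonneg (fun _ _ => ha k) x

theorem integrable_gridStep (a : (Fin d → Fin N) → ℝ) (μ : Measure (Fin d → ℝ))
    [IsFiniteMeasure μ] :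
    Integrable (gridStep N a) μ :=
  integrable_finsetSum _ fun k _ => (integrable_const _).indicator (measurableSet_gridCell N k)

end GridStep

section Approximation

variable {d : ℕ} {f : (Fin d → ℝ) → ℝ} {η : ℝ}

theorem exists_gridStep_integral_abs_sub_le (hf : IntegrableOn f (unitCube d)) (hη : 0 < η) :
    ∃ N, 0 < N ∧ ∃ a : (Fin d → Fin N) → ℝ, ∫ x in unitCube d, |f x - gridStep N a x| ≤ η := by
  have hf' : Integrable ((unitCube d).indicator f) :=
    (integrable_indicator_iff measurableSet_unitCube).2 hf
  obtain ⟨c, hc_supp, hc_close, hc_cont, hc_int⟩ :=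
    hf'.exists_hasCompactSupport_integral_sub_le (half_pos hη)
  obtain ⟨θ, hθ, hcθ⟩ := Metric.uniformContinuous_iff.1
    (hc_supp.uniformContinuous_of_continuous hc_cont) _ (half_pos hη)
  obtain ⟨n, hn⟩ := exists_nat_one_div_lt hθ
  refine ⟨n + 1, n.succ_pos, fun k => c (gridCorner (n + 1) k), ?_⟩
  have hpt : ∀ x ∈ unitCube d, |f x - gridStep (n + 1) (fun k => c (gridCorner (n + 1) k)) x|
      ≤ ‖(unitCube d).indicator f x - c x‖ + η / 2 := by
    intro x hx
    obtain ⟨k, hk⟩ := exists_mem_gridCell n.succ_pos hx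
    have hosc : |c x - c (gridCorner (n + 1) k)| < η / 2 := by
      rw [← Real.dist_eq]
      refine hcθ ((dist_le_of_mem_gridCell hk (gridCorner_mem_gridCell _ k)).trans_lt ?_)
      exact_mod_cast hn
    rw [gridStep_eq_of_mem hk, indicator_of_mem hx, Real.norm_eq_abs]
    linarith [abs_sub_le (f x) (c x) (c (gridCorner (n + 1) k))]
  have hint : Integrable (fun x => ‖(unitCube d).indicator f x - c x‖) := (hf'.sub hc_int).norm
  calc ∫ x in unitCube d, |f x - gridStep (n + 1) (fun k => c (gridCorner (n + 1) k)) x|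
      ≤ ∫ x in unitCube d, (‖(unitCube d).indicator f x - c x‖ + η / 2) :=
        integral_mono_of_nonneg (ae_of_all _ fun _ => abs_nonneg _)
          (hint.restrict.add (integrable_const _))
          (ae_restrict_of_forall_mem measurableSet_unitCube hpt)
    _ = (∫ x in unitCube d, ‖(unitCube d).indicator f x - c x‖) + η / 2 := by
        rw [integral_add hint.restrict (integrable_const _), integral_const]
        simp
    _ ≤ (∫ x, ‖(unitCube d).indicator f x - c x‖) + η / 2 :=
        add_le_add_left (setIntegral_le_integral hint (ae_of_all _ fun _ => norm_nonneg _)) _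
    _ ≤ η := by linarith

theorem exists_nonneg_gridStep_integral_abs_sub_le (hf : IntegrableOn f (unitCube d))
    (hf0 : ∀ x ∈ unitCube d, 0 ≤ f x) (hη : 0 < η) :
    ∃ N, 0 < N ∧ ∃ a : (Fin d → Fin N) → ℝ,
      (∀ k, 0 ≤ a k) ∧ ∫ x in unitCube d, |f x - gridStep N a x| ≤ η := by
  obtain ⟨N, hN, a, ha⟩ := exists_gridStep_integral_abs_sub_le hf hη
  refine ⟨N, hN, fun k => max (a k) 0, fun k => le_max_right _ _, le_trans ?_ ha⟩
  refine integral_mono_of_nonneg (ae_of_all _ fun _ => abs_nonneg _)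
    (hf.sub (integrable_gridStep a _)).abs
    (ae_restrict_of_forall_mem measurableSet_unitCube fun x hx => ?_)
  beta_reduce
  rw [gridStep_comp hN (fun t => max t 0) a hx]
  simpa only [max_eq_left (hf0 x hx)] using abs_max_sub_max_le_abs (f x) (gridStep N a x) 0

end Approximation

section RelativeEntropy

open Real

theorem sub_le_mul_log_div {a b : ℝ} (ha : 0 ≤ a) (hb : 0 < b) : a - b ≤ a * log (a / b) := by
  rcases ha.eq_or_lt with rfl | ha'
  · simpa using hb.le
  have hlog := one_sub_inv_le_log_of_pos (div_pos ha' hb)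
  rw [inv_div] at hlog
  calc a - b = a * (1 - b / a) := by field_simp
    _ ≤ a * log (a / b) := mul_le_mul_of_nonneg_left hlog ha

theorem mul_log_div_add_le {a b M δ : ℝ} (ha : 0 ≤ a) (haM : a ≤ M) (hb : 0 ≤ b) (hδ : 0 < δ) :
    a * log (a / (b + δ)) ≤ M / δ * |a - b| := by
  have hbδ : 0 < b + δ := by positivity
  have hM : 0 ≤ M := ha.trans haM
  rcases ha.eq_or_lt with rfl | ha'
  · rw [zero_mul]
    positivity
  have hlog : log (a / (b + δ)) ≤ (a - (b + δ)) / (b + δ) := by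
    rw [← div_sub_one hbδ.ne']
    exact log_le_sub_one_of_pos (div_pos ha' hbδ)
  rcases le_or_gt (a - (b + δ)) 0 with hle | hgt
  · calc a * log (a / (b + δ)) ≤ a * ((a - (b + δ)) / (b + δ)) :=
          mul_le_mul_of_nonneg_left hlog ha
      _ ≤ 0 := mul_nonpos_of_nonneg_of_nonpos ha (div_nonpos_of_nonpos_of_nonneg hle hbδ.le)
      _ ≤ M / δ * |a - b| := by positivity
  · calc a * log (a / (b + δ)) ≤ M * ((a - (b + δ)) / (b + δ)) :=
          (mul_le_mul_of_nonneg_left hlog ha).trans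
            (mul_le_mul_of_nonneg_right haM (div_nonneg hgt.le hbδ.le))
      _ ≤ M * ((a - b) / δ) := by
          gcongr <;> linarith
      _ ≤ M / δ * |a - b| := by
          rw [mul_div_assoc', div_mul_eq_mul_div]
          gcongr
          exact le_abs_self _

variable {α : Type*} [MeasurableSpace α] {μ : Measure α}

theorem integrable_mul_log_div {f g R : α → ℝ} (hf : Integrable f μ) (hg : Integrable g μ)
    (hR : Integrable R μ) (hf0 : ∀ᵐ x ∂μ, 0 ≤ f x) (hg0 : ∀ᵐ x ∂μ, 0 < g x)
    (hle : ∀ᵐ x ∂μ, f x * log (f x / g x) ≤ R x) :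
    Integrable (fun x => f x * log (f x / g x)) μ := by
  refine ((hf.sub hg).abs.add hR.abs).mono'
    (hf.aemeasurable.mul (measurable_log.comp_aemeasurable
      (hf.aemeasurable.div hg.aemeasurable))).aestronglyMeasurable ?_
  filter_upwards [hf0, hg0, hle] with x hfx hgx hRx
  rw [Real.norm_eq_abs]
  exact (abs_le_max_abs_abs (sub_le_mul_log_div hfx hgx) hRx).trans
    (max_le_add_of_nonneg (abs_nonneg _) (abs_nonneg _))

theorem integral_mul_log_div_normalized_le [IsProbabilityMeasure μ] {f h : α → ℝ} {M δ η : ℝ}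
    (hf : Integrable f μ) (hh : Integrable h μ) (hf0 : ∀ᵐ x ∂μ, 0 ≤ f x)
    (hfM : ∀ᵐ x ∂μ, f x ≤ M) (hh0 : ∀ᵐ x ∂μ, 0 ≤ h x) (hf1 : ∫ x, f x ∂μ = 1) (hδ : 0 < δ)
    (hfh : ∫ x, |f x - h x| ∂μ ≤ η) :
    ∫ x, f x * log (f x / ((h x + δ) / ((∫ y, h y ∂μ) + δ))) ∂μ ≤ M / δ * η + (η + δ) := by
  set C := (∫ y, h y ∂μ) + δ
  have hC : 0 < C := add_pos_of_nonneg_of_pos (integral_nonneg_of_ae hh0) hδ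
  have hM : 0 ≤ M := by
    obtain ⟨x, hx₀, hxM⟩ := (hf0.and hfM).exists
    exact hx₀.trans hxM
  have hfh_int : Integrable (fun x => |f x - h x|) μ := (hf.sub hh).abs
  have hlogC : log C ≤ η + δ := by
    have hhf : ∫ x, h x ∂μ ≤ 1 + η :=
      calc ∫ x, h x ∂μ ≤ ∫ x, (f x + |f x - h x|) ∂μ :=
            integral_mono hh (hf.add hfh_int) fun x => by linarith [neg_abs_le (f x - h x)]
        _ ≤ 1 + η := by rw [integral_add hf hfh_int, hf1]; linarith
    linarith [log_le_sub_one_of_pos hC]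
  have hR : Integrable (fun x => M / δ * |f x - h x| + f x * log C) μ :=
    (hfh_int.const_mul _).add (hf.mul_const _)
  have hpt : ∀ᵐ x ∂μ, f x * log (f x / ((h x + δ) / C)) ≤ M / δ * |f x - h x| + f x * log C := by
    filter_upwards [hf0, hfM, hh0] with x hfx hfxM hhx
    have hsplit :
        f x * log (f x / ((h x + δ) / C)) = f x * log (f x / (h x + δ)) + f x * log C := by
      rcases hfx.eq_or_lt with h0 | hpos
      · simp [← h0]
      · rw [div_div_eq_mul_div, mul_div_right_comm, log_mul (by positivity) hC.ne', mul_add]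
    rw [hsplit]
    exact add_le_add_left (mul_log_div_add_le hfx hfxM hhx hδ) _
  have hint := integrable_mul_log_div (g := fun x => (h x + δ) / C) hf
    ((hh.add (integrable_const δ)).div_const C) hR hf0
    (by filter_upwards [hh0] with x hx; exact div_pos (by linarith) hC) hpt
  calc ∫ x, f x * log (f x / ((h x + δ) / C)) ∂μ ≤ ∫ x, (M / δ * |f x - h x| + f x * log C) ∂μ :=
        integral_mono_ae hint hR hpt
    _ = M / δ * ∫ x, |f x - h x| ∂μ + log C := by
        rw [integral_add (hfh_int.const_mul _) (hf.mul_const _), integral_const_mul,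
          integral_mul_const, hf1, one_mul]
    _ ≤ M / δ * η + (η + δ) := by gcongr

theorem isProbabilityMeasure_withDensity_ofReal_iff {g : α → ℝ} (hg : Integrable g μ)
    (hg0 : ∀ᵐ x ∂μ, 0 ≤ g x) :
    IsProbabilityMeasure (μ.withDensity fun x => ENNReal.ofReal (g x)) ↔ ∫ x, g x ∂μ = 1 := by
  rw [isProbabilityMeasure_iff, withDensity_apply _ MeasurableSet.univ, Measure.restrict_univ,
    ← ofReal_integral_eq_lintegral_ofReal hg hg0, ENNReal.ofReal_eq_one]

end RelativeEntropy

theorem exists_gridStep_integral_mul_log_div_lt {d : ℕ} {f : (Fin d → ℝ) → ℝ} {M ε : ℝ}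
    (hf : IntegrableOn f (unitCube d)) (hf0 : ∀ x ∈ unitCube d, 0 ≤ f x)
    (hfM : ∀ x ∈ unitCube d, f x ≤ M) (hf1 : ∫ x in unitCube d, f x = 1) (hε : 0 < ε) :
    ∃ N, 0 < N ∧ ∃ v : (Fin d → Fin N) → ℝ, (∀ k, 0 < v k) ∧
      ∫ x in unitCube d, gridStep N v x = 1 ∧
      ∫ x in unitCube d, f x * Real.log (f x / gridStep N v x) < ε := by
  have hM : 0 ≤ M := by
    have h1 : (1 : Fin d → ℝ) ∈ unitCube d := fun _ _ => ⟨one_pos, le_rfl⟩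
    exact (hf0 1 h1).trans (hfM 1 h1)
  set δ := ε / 3
  have hδ : 0 < δ := by positivity
  -- `M / δ * η + η = δ`, so the bound of `integral_mul_log_div_normalized_le` is `2δ < ε`
  set η := δ ^ 2 / (M + δ)
  obtain ⟨N, hN, a, ha0, hfa⟩ :=
    exists_nonneg_gridStep_integral_abs_sub_le hf hf0 (show 0 < η by positivity)
  set C := (∫ x in unitCube d, gridStep N a x) + δ
  have hC : 0 < C := add_pos_of_nonneg_of_pos (integral_nonneg (gridStep_nonneg ha0)) hδ
  have hv : ∀ x ∈ unitCube d, gridStep N (fun k => (a k + δ) / C) x = (gridStep N a x + δ) / C :=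
    fun x hx => gridStep_comp hN (fun t => (t + δ) / C) a hx
  refine ⟨N, hN, fun k => (a k + δ) / C, fun k => div_pos (by linarith [ha0 k]) hC, ?_, ?_⟩
  · rw [setIntegral_congr_fun measurableSet_unitCube hv, integral_div,
      integral_add (integrable_gridStep a _) (integrable_const δ), integral_const]
    simp [C, div_self hC.ne']
  · rw [setIntegral_congr_fun measurableSet_unitCube fun x hx => by rw [hv x hx]]
    calc _ ≤ M / δ * η + (η + δ) := integral_mul_log_div_normalized_le hf (integrable_gridStep a _)
          (ae_restrict_of_forall_mem measurableSet_unitCube hf0)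
          (ae_restrict_of_forall_mem measurableSet_unitCube hfM)
          (ae_of_all _ (gridStep_nonneg ha0)) hf1 hδ hfa
      _ = 2 * δ := by simp only [η]; field_simp; ring
      _ < ε := by simp only [δ]; linarith

/-- Let `F*` be a probability measure on `(0,1]^d` with a bounded density
`f ≤ M`.  Then for every `ε > 0` there is a probability measure `G` with strictly
positive piecewise constant density on a finite rectangular partition of `(0,1]^d` such
that `KL(F*‖G) = ∫ f log(f/g) dμ < ε`. -/
theorem stmt19
    (d : ℕ) (U : Set (Fin d → ℝ)) (hU : U = Set.univ.pi fun _ => Ioc (0:ℝ) 1)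
    (f : (Fin d → ℝ) → ℝ) (M : ℝ) (Fstar : Measure (Fin d → ℝ))
    [IsProbabilityMeasure Fstar]
    (hfm : Measurable f) (hf0 : ∀ x ∈ U, 0 ≤ f x) (hfM : ∀ x ∈ U, f x ≤ M)
    (hF : Fstar = (volume.restrict U).withDensity fun x => ENNReal.ofReal (f x)) :
    ∀ ε > 0, ∃ (n : ℕ) (lo hi : Fin n → Fin d → ℝ) (v : Fin n → ℝ),
      (∀ i, 0 < v i) ∧
      (∀ i i', i ≠ i' →
        Disjoint (Set.univ.pi fun j => Ioc (lo i j) (hi i j))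
          (Set.univ.pi fun j => Ioc (lo i' j) (hi i' j))) ∧
      (⋃ i, Set.univ.pi fun j => Ioc (lo i j) (hi i j)) = U ∧
      IsProbabilityMeasure
        ((volume.restrict U).withDensity fun x => ENNReal.ofReal
          (∑ i, Set.indicator (Set.univ.pi fun j => Ioc (lo i j) (hi i j))
            (fun _ => v i) x)) ∧
      (∫ x in U, f x * Real.log (f x /
          ∑ i, Set.indicator (Set.univ.pi fun j => Ioc (lo i j) (hi i j))
            (fun _ => v i) x)) < ε := by
  intro ε hε
  obtain rfl : U = unitCube d := hU
  subst hF
  have hf : IntegrableOn f (unitCube d) := (integrable_const M).mono' hfm.aestronglyMeasurable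
    (ae_restrict_of_forall_mem measurableSet_unitCube fun x hx => by
      rw [Real.norm_of_nonneg (hf0 x hx)]; exact hfM x hx)
  have hf1 : ∫ x in unitCube d, f x = 1 := (isProbabilityMeasure_withDensity_ofReal_iff hf
    (ae_restrict_of_forall_mem measurableSet_unitCube hf0)).1 ‹_›
  obtain ⟨N, hN, v, hv0, hv1, hkl⟩ := exists_gridStep_integral_mul_log_div_lt hf hf0 hfM hf1 hε
  let e := (finFunctionFinEquiv (m := N) (n := d)).symm
  have hsum : ∀ x, ∑ i, (gridCell N (e i)).indicator (fun _ => v (e i)) x = gridStep N v x :=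
    fun x => e.sum_comp fun k => (gridCell N k).indicator (fun _ => v k) x
  simp only [gridCell] at hsum
  refine ⟨N ^ d, fun i j => (e i j : ℝ) / N, fun i j => ((e i j : ℝ) + 1) / N, fun i => v (e i),
    fun i => hv0 (e i), fun i i' hne => pairwise_disjoint_gridCell N (e.injective.ne hne),
    (e.surjective.iUnion_comp (gridCell N)).trans (iUnion_gridCell hN), ?_, ?_⟩
  · simp only [hsum]
    exact (isProbabilityMeasure_withDensity_ofReal_iff (integrable_gridStep v _)
      (ae_of_all _ (gridStep_nonneg fun k => (hv0 k).le))).2 hv1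
  · simpa only [hsum] using hkl
end
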